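/- For every n ≥ 2 and every σ ∈ (0,1) there exists a measurable set E ⊆ ℝⁿ, which is a countable union of open balls any two of which are at distance at least 1/2 from each other, such that P_s(E) < ∞ for every s ∈ (0,σ) and P_s(E) = ∞ for every s ∈ [σ,1). -/

import Mathlib

open MeasureTheory Metric Set Filter Bornology
open scoped ENNReal Topology

/-- The fractional kernel `|x-y|^{-(n+s)}` as an extended nonnegative real. -/
noncomputable def fracKer (n : ℕ) (s : ℝ) (x y : EuclideanSpace ℝ (Fin n)) : ℝ≥0∞ :=
  ENNReal.ofReal (‖x - y‖ ^ (-((n : ℝ) + s)))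

/-- The interaction `L_s(A,B) = ∫_A ∫_B |x-y|^{-(n+s)} dy dx`. -/
noncomputable def interL (n : ℕ) (s : ℝ) (A B : Set (EuclideanSpace ℝ (Fin n))) : ℝ≥0∞ :=
  ∫⁻ x in A, ∫⁻ y in B, fracKer n s x y

/-- The local part of the `s`-fractional perimeter of `E` in `Ω`. -/
noncomputable def perL (n : ℕ) (s : ℝ) (E Ω : Set (EuclideanSpace ℝ (Fin n))) : ℝ≥0∞ :=
  interL n s (E ∩ Ω) (Eᶜ ∩ Ω)

/-- The nonlocal part of the `s`-fractional perimeter of `E` in `Ω`. -/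
noncomputable def perNL (n : ℕ) (s : ℝ) (E Ω : Set (EuclideanSpace ℝ (Fin n))) : ℝ≥0∞ :=
  interL n s (E ∩ Ω) (Eᶜ \ Ω) + interL n s (E \ Ω) (Eᶜ ∩ Ω)

/-- The `s`-fractional perimeter of `E` in `Ω`. -/
noncomputable def per (n : ℕ) (s : ℝ) (E Ω : Set (EuclideanSpace ℝ (Fin n))) : ℝ≥0∞ :=
  interL n s (E ∩ Ω) (Eᶜ ∩ Ω) + interL n s (E ∩ Ω) (Eᶜ \ Ω) + interL n s (E \ Ω) (Eᶜ ∩ Ω)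

/-- The global `s`-fractional perimeter `P_s(E) = L_s(E, Eᶜ)`. -/
noncomputable def perG (n : ℕ) (s : ℝ) (E : Set (EuclideanSpace ℝ (Fin n))) : ℝ≥0∞ :=
  interL n s E Eᶜ

/-- The measure theoretic boundary `∂⁻E`. Note `volume (ball x r) = ω_n rⁿ`. -/
def mtb (n : ℕ) (E : Set (EuclideanSpace ℝ (Fin n))) : Set (EuclideanSpace ℝ (Fin n)) :=
  {x | ∀ r > (0 : ℝ), 0 < volume (E ∩ ball x r) ∧ volume (E ∩ ball x r) < volume (ball x r)}

/-- `E` has locally finite `s`-perimeter: finite `s`-perimeter in every bounded open set. -/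
def locFinPer (n : ℕ) (s : ℝ) (E : Set (EuclideanSpace ℝ (Fin n))) : Prop :=
  ∀ Ω : Set (EuclideanSpace ℝ (Fin n)), IsOpen Ω → IsBounded Ω → per n s E Ω < ⊤

/-! The balls `B(4i·e, rᵢ)` with `|e| = 1` and `rᵢ = (i+1)^(-1/(n-σ))` work. Translation and
scaling give `P_s(B_r(c)) = r^(n-s) P_s(B_1)`, and `P_s(B_1) < ∞` for `s ∈ (0,1)`: the inner
integral at `x` is at most a constant times `(1-|x|)^(-s)`, which is integrable on `B_1` by polar
coordinates. As the balls are far apart, `P_s(E)` is at most `Σ P_s(Bᵢ)` and at least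
`Σ L_s(Bᵢ, B(cᵢ + (3/2) rᵢ e, rᵢ/2))`, and by scaling both sums are constant multiples of
`Σ rᵢ^(n-s) = Σ (i+1)^(-(n-s)/(n-σ))`, which converges exactly when `s < σ`. -/

theorem preimage_add_smul_ball {E : Type*} [NormedAddCommGroup E] [NormedSpace ℝ E] {r : ℝ}
    (hr : 0 < r) (c p : E) (ρ : ℝ) :
    (c + r • ·) ⁻¹' ball (c + r • p) (r * ρ) = ball p ρ := by
  ext x
  simp [dist_eq_norm, ← smul_sub, norm_smul, abs_of_pos hr, hr]

section AddHaar

variable {E : Type*} [NormedAddCommGroup E] [NormedSpace ℝ E] [MeasurableSpace E] [BorelSpace E]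
  [FiniteDimensional ℝ E] (μ : Measure E) [μ.IsAddHaarMeasure]

theorem lintegral_comp_add_smul {r : ℝ} (hr : 0 < r) (c : E) (f : E → ℝ≥0∞) :
    ENNReal.ofReal (r ^ Module.finrank ℝ E) * ∫⁻ x, f (c + r • x) ∂μ = ∫⁻ y, f y ∂μ := by
  have hmap : ∫⁻ x, f (c + r • x) ∂μ = ∫⁻ y, f (c + y) ∂(Measure.map (r • ·) μ) :=
    (lintegral_map_equiv (fun y => f (c + y)) (MeasurableEquiv.smul₀ r hr.ne')).symm
  have hrd : 0 < r ^ Module.finrank ℝ E := pow_pos hr _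
  rw [hmap, Measure.map_addHaar_smul μ hr.ne', lintegral_smul_measure,
    lintegral_add_left_eq_self (fun y => f y) c, smul_eq_mul, ← mul_assoc,
    abs_of_pos (inv_pos.2 hrd), ← ENNReal.ofReal_mul hrd.le, mul_inv_cancel₀ hrd.ne',
    ENNReal.ofReal_one, one_mul]

theorem setLIntegral_comp_add_smul {r : ℝ} (hr : 0 < r) (c : E) (f : E → ℝ≥0∞) {A : Set E}
    (hA : MeasurableSet A) :
    ENNReal.ofReal (r ^ Module.finrank ℝ E) * ∫⁻ x in (c + r • ·) ⁻¹' A, f (c + r • x) ∂μ =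
      ∫⁻ y in A, f y ∂μ := by
  have hpre : MeasurableSet ((c + r • ·) ⁻¹' A) :=
    hA.preimage ((measurable_const_add c).comp (measurable_const_smul r))
  rw [← lintegral_indicator hA, ← lintegral_comp_add_smul μ hr c, ← lintegral_indicator hpre]
  rfl

theorem setLIntegral_compl_unitBall_norm_rpow_lt_top {p : ℝ}
    (hp : (Module.finrank ℝ E : ℝ) < p) :
    ∫⁻ z in (ball (0 : E) 1)ᶜ, ENNReal.ofReal (‖z‖ ^ (-p)) ∂μ < ⊤ := by
  have hp0 : 0 < p := lt_of_le_of_lt (Nat.cast_nonneg _) hp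
  -- on `‖z‖ ≥ 1` we have `1 + ‖z‖ ≤ 2 ‖z‖`
  have hbound : ∀ z ∈ (ball (0 : E) 1)ᶜ, ENNReal.ofReal (‖z‖ ^ (-p)) ≤
      ENNReal.ofReal (2 ^ p) * ENNReal.ofReal ((1 + ‖z‖) ^ (-p)) := by
    intro z hz
    have hz1 : 1 ≤ ‖z‖ := by simpa using hz
    have h : ‖z‖ ^ (-p) ≤ ((1 + ‖z‖) / 2) ^ (-p) :=
      Real.rpow_le_rpow_of_nonpos (by positivity) (by linarith) (by linarith)
    rw [Real.div_rpow (by positivity) zero_le_two, Real.rpow_neg zero_le_two, div_inv_eq_mul,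
      mul_comm] at h
    rw [← ENNReal.ofReal_mul (by positivity)]
    exact ENNReal.ofReal_le_ofReal h
  calc ∫⁻ z in (ball (0 : E) 1)ᶜ, ENNReal.ofReal (‖z‖ ^ (-p)) ∂μ
      ≤ ∫⁻ z in (ball (0 : E) 1)ᶜ, ENNReal.ofReal (2 ^ p) * ENNReal.ofReal ((1 + ‖z‖) ^ (-p)) ∂μ :=
        setLIntegral_mono' measurableSet_ball.compl hbound
    _ ≤ ∫⁻ z, ENNReal.ofReal (2 ^ p) * ENNReal.ofReal ((1 + ‖z‖) ^ (-p)) ∂μ :=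
        setLIntegral_le_lintegral _ _
    _ = ENNReal.ofReal (2 ^ p) * ∫⁻ z, ENNReal.ofReal ((1 + ‖z‖) ^ (-p)) ∂μ :=
        lintegral_const_mul' _ _ ENNReal.ofReal_ne_top
    _ < ⊤ := ENNReal.mul_lt_top ENNReal.ofReal_lt_top (finite_integral_one_add_norm hp)

theorem setLIntegral_unitBall_one_sub_norm_rpow_lt_top [Nontrivial E] {s : ℝ} (hs : s < 1) :
    ∫⁻ x in ball (0 : E) 1, ENNReal.ofReal ((1 - ‖x‖) ^ (-s)) ∂μ < ⊤ := by
  refine IntegrableOn.setLIntegral_lt_top ?_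
  rw [integrableOn_fun_norm_addHaar μ (f := fun y => (1 - y) ^ (-s))]
  have hint : IntegrableOn (fun y : ℝ => (1 - y) ^ (-s)) (Ioo 0 1) := by
    have := (intervalIntegral.intervalIntegrable_rpow' (a := 0) (b := 1)
      (by linarith : -1 < -s)).comp_sub_left 1
    rw [sub_zero, sub_self] at this
    exact (intervalIntegrable_iff_integrableOn_Ioo_of_le zero_le_one).1 this.symm
  refine hint.mono' (by fun_prop) ((ae_restrict_iff' measurableSet_Ioo).2 (.of_forall ?_))
  intro y hy
  rw [smul_eq_mul, norm_mul, norm_pow, Real.norm_of_nonneg hy.1.le,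
    Real.norm_of_nonneg (Real.rpow_nonneg (by linarith [hy.2]) _)]
  exact mul_le_of_le_one_left (Real.rpow_nonneg (by linarith [hy.2]) _)
    (pow_le_one₀ hy.1.le hy.2.le)

end AddHaar

theorem sub_le_dist_of_mem_ball {X : Type*} [PseudoMetricSpace X] {c c' x y : X} {r r' : ℝ}
    (hx : x ∈ ball c r) (hy : y ∈ ball c' r') : dist c c' - (r + r') ≤ dist x y := by
  linarith [dist_triangle4 c x y c', mem_ball'.1 hx, mem_ball.1 hy]

section Configuration

variable {X : Type*} {ι : Type*} {c : ι → X} {r : ι → ℝ}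

theorem pairwise_disjoint_ball [PseudoMetricSpace X]
    (hc : Pairwise fun i j => 4 ≤ dist (c i) (c j)) (hr : ∀ i, r i ≤ 1) :
    Pairwise (Function.onFun Disjoint fun i => ball (c i) (r i)) :=
  fun i j hij => ball_disjoint_ball (by linarith [hc hij, hr i, hr j])

theorem ball_add_smul_subset_compl_iUnion [NormedAddCommGroup X] [NormedSpace ℝ X]
    (hc : Pairwise fun i j => 4 ≤ dist (c i) (c j)) (hr : ∀ i, r i ≤ 1) {e : X} (he : ‖e‖ = 1)
    (i : ι) : ball (c i + r i • (3 / 2 : ℝ) • e) (r i * (1 / 2)) ⊆ (⋃ j, ball (c j) (r j))ᶜ := by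
  intro y hy
  set q := c i + r i • (3 / 2 : ℝ) • e
  have hri : 0 < r i := by linarith [mem_ball.1 hy, dist_nonneg (x := y) (y := q)]
  have hqc : dist q (c i) = 3 / 2 * r i := by
    rw [dist_eq_norm, add_sub_cancel_left, norm_smul, norm_smul, he, Real.norm_of_nonneg hri.le]
    norm_num
    ring
  have hlow : r i ≤ dist y (c i) := by linarith [dist_triangle q y (c i), mem_ball'.1 hy]
  have hup : dist y (c i) ≤ 2 * r i := by linarith [dist_triangle y q (c i), mem_ball.1 hy]
  simp only [mem_compl_iff, mem_iUnion, not_exists, mem_ball, not_lt]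
  intro j
  rcases eq_or_ne i j with rfl | hij
  · exact hlow
  · linarith [hc hij, dist_triangle (c i) y (c j), dist_comm y (c i), hr i, hr j]

end Configuration

theorem pairwise_four_le_dist_smul {X : Type*} [NormedAddCommGroup X] [NormedSpace ℝ X] {e : X}
    (he : ‖e‖ = 1) : Pairwise fun i j : ℕ => 4 ≤ dist ((4 * i : ℝ) • e) ((4 * j : ℝ) • e) := by
  intro i j hij
  have h1 : (1 : ℝ) ≤ |(i : ℝ) - j| := by
    exact_mod_cast Int.one_le_abs (sub_ne_zero.2 (Int.natCast_inj.not.2 hij))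
  rw [dist_eq_norm, ← sub_smul, norm_smul, he, mul_one, Real.norm_eq_abs, ← mul_sub, abs_mul,
    abs_of_pos four_pos]
  linarith

theorem tsum_ofReal_nat_add_one_rpow_rpow_lt_top_iff (α q : ℝ) :
    ∑' i : ℕ, ENNReal.ofReal ((((i : ℝ) + 1) ^ (-α)) ^ q) < ⊤ ↔ 1 < α * q := by
  have hform : (fun i : ℕ => (((i : ℝ) + 1) ^ (-α)) ^ q) =
      fun i : ℕ => 1 / |(i : ℝ) + 1| ^ (α * q) := by
    ext i
    rw [← Real.rpow_mul (by positivity), abs_of_pos (by positivity), neg_mul,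
      Real.rpow_neg (by positivity), one_div]
  rw [← Real.summable_one_div_nat_add_rpow 1, ← hform]
  refine ⟨fun h => ?_, fun h => h.tsum_ofReal_lt_top⟩
  refine (ENNReal.summable_toReal h.ne).congr fun i => ?_
  exact ENNReal.toReal_ofReal (by positivity)

theorem fracKer_add_smul (n : ℕ) (s : ℝ) {r : ℝ} (hr : 0 < r) (c x y : EuclideanSpace ℝ (Fin n)) :
    fracKer n s (c + r • x) (c + r • y) =
      ENNReal.ofReal (r ^ (-((n : ℝ) + s))) * fracKer n s x y := by
  rw [fracKer, fracKer, add_sub_add_left_eq_sub, ← smul_sub, norm_smul, Real.norm_of_nonneg hr.le,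
    Real.mul_rpow hr.le (norm_nonneg _), ENNReal.ofReal_mul (Real.rpow_nonneg hr.le _)]

theorem interL_eq_mul_interL_preimage (n : ℕ) (s : ℝ) {r : ℝ} (hr : 0 < r)
    (c : EuclideanSpace ℝ (Fin n)) {A B : Set (EuclideanSpace ℝ (Fin n))}
    (hA : MeasurableSet A) (hB : MeasurableSet B) :
    interL n s A B = ENNReal.ofReal (r ^ ((n : ℝ) - s)) *
      interL n s ((c + r • ·) ⁻¹' A) ((c + r • ·) ⁻¹' B) := by
  have hdim := finrank_euclideanSpace_fin (𝕜 := ℝ) (n := n)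
  have hinner : ∀ x, ∫⁻ y in B, fracKer n s (c + r • x) y =
      ENNReal.ofReal (r ^ n * r ^ (-((n : ℝ) + s))) *
        ∫⁻ y in (c + r • ·) ⁻¹' B, fracKer n s x y := by
    intro x
    rw [← setLIntegral_comp_add_smul volume hr c _ hB, hdim]
    simp_rw [fracKer_add_smul n s hr]
    rw [lintegral_const_mul' _ _ ENNReal.ofReal_ne_top, ← mul_assoc,
      ← ENNReal.ofReal_mul (by positivity)]
  have hexp : r ^ n * (r ^ n * r ^ (-((n : ℝ) + s))) = r ^ ((n : ℝ) - s) := by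
    simp only [← Real.rpow_natCast, ← Real.rpow_add hr]
    ring_nf
  rw [interL, ← setLIntegral_comp_add_smul volume hr c _ hA, hdim]
  simp_rw [hinner]
  rw [lintegral_const_mul' _ _ ENNReal.ofReal_ne_top, ← mul_assoc,
    ← ENNReal.ofReal_mul (by positivity), hexp, interL]

theorem perG_ball (n : ℕ) (s : ℝ) (c : EuclideanSpace ℝ (Fin n)) {r : ℝ} (hr : 0 < r) :
    perG n s (ball c r) = ENNReal.ofReal (r ^ ((n : ℝ) - s)) * perG n s (ball 0 1) := by
  have hball : (c + r • ·) ⁻¹' ball c r = ball 0 1 := by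
    simpa using preimage_add_smul_ball hr c 0 1
  rw [perG, interL_eq_mul_interL_preimage n s hr c measurableSet_ball measurableSet_ball.compl,
    preimage_compl, hball, perG]

theorem interL_ball_add_smul (n : ℕ) (s : ℝ) {r : ℝ} (hr : 0 < r)
    (c p q : EuclideanSpace ℝ (Fin n)) (ρ τ : ℝ) :
    interL n s (ball (c + r • p) (r * ρ)) (ball (c + r • q) (r * τ)) =
      ENNReal.ofReal (r ^ ((n : ℝ) - s)) * interL n s (ball p ρ) (ball q τ) := by
  rw [interL_eq_mul_interL_preimage n s hr c measurableSet_ball measurableSet_ball,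
    preimage_add_smul_ball hr, preimage_add_smul_ball hr]

theorem setLIntegral_compl_ball_fracKer (n : ℕ) (s : ℝ) (x : EuclideanSpace ℝ (Fin n)) {d : ℝ}
    (hd : 0 < d) :
    ∫⁻ y in (ball x d)ᶜ, fracKer n s x y =
      ENNReal.ofReal (d ^ (-s)) * ∫⁻ z in (ball 0 1)ᶜ, fracKer n s 0 z := by
  have hball : (x + d • ·) ⁻¹' ball x d = ball 0 1 := by
    simpa using preimage_add_smul_ball hd x 0 1
  have hker : ∀ z, fracKer n s x (x + d • z) =
      ENNReal.ofReal (d ^ (-((n : ℝ) + s))) * fracKer n s 0 z := by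
    simpa using fracKer_add_smul n s hd x 0
  have hexp : d ^ n * d ^ (-((n : ℝ) + s)) = d ^ (-s) := by
    rw [← Real.rpow_natCast, ← Real.rpow_add hd]
    ring_nf
  rw [← setLIntegral_comp_add_smul volume hd x _ measurableSet_ball.compl, preimage_compl, hball,
    finrank_euclideanSpace_fin]
  simp_rw [hker]
  rw [lintegral_const_mul' _ _ ENNReal.ofReal_ne_top, ← mul_assoc,
    ← ENNReal.ofReal_mul (by positivity), hexp]

theorem perG_unitBall_lt_top {n : ℕ} (hn : 1 ≤ n) {s : ℝ} (hs0 : 0 < s) (hs1 : s < 1) :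
    perG n s (ball 0 1) < ⊤ := by
  have : Nonempty (Fin n) := ⟨⟨0, hn⟩⟩
  have htail : ∫⁻ z in (ball (0 : EuclideanSpace ℝ (Fin n)) 1)ᶜ, fracKer n s 0 z < ⊤ := by
    simpa [fracKer] using setLIntegral_compl_unitBall_norm_rpow_lt_top
      (E := EuclideanSpace ℝ (Fin n)) volume (p := (n : ℝ) + s) (by simpa using hs0)
  set τ := ∫⁻ z in (ball (0 : EuclideanSpace ℝ (Fin n)) 1)ᶜ, fracKer n s 0 z
  have hinner : ∀ x ∈ ball (0 : EuclideanSpace ℝ (Fin n)) 1,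
      ∫⁻ y in (ball 0 1)ᶜ, fracKer n s x y ≤ τ * ENNReal.ofReal ((1 - ‖x‖) ^ (-s)) := by
    intro x hx
    have hd : 0 < 1 - ‖x‖ := by simpa using hx
    calc ∫⁻ y in (ball 0 1)ᶜ, fracKer n s x y
        ≤ ∫⁻ y in (ball x (1 - ‖x‖))ᶜ, fracKer n s x y :=
          lintegral_mono_set (compl_subset_compl.2 (ball_subset_ball' (by simp)))
      _ = τ * ENNReal.ofReal ((1 - ‖x‖) ^ (-s)) := by
          rw [setLIntegral_compl_ball_fracKer n s x hd, mul_comm]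
  calc perG n s (ball 0 1)
      ≤ ∫⁻ x in ball 0 1, τ * ENNReal.ofReal ((1 - ‖x‖) ^ (-s)) :=
        setLIntegral_mono' measurableSet_ball hinner
    _ = τ * ∫⁻ x in ball 0 1, ENNReal.ofReal ((1 - ‖x‖) ^ (-s)) :=
        lintegral_const_mul' _ _ htail.ne
    _ < ⊤ := ENNReal.mul_lt_top htail (setLIntegral_unitBall_one_sub_norm_rpow_lt_top _ hs1)

section Interaction

variable {n : ℕ} {s : ℝ}

theorem interL_mono {A A' B B' : Set (EuclideanSpace ℝ (Fin n))} (hA : A ⊆ A') (hB : B ⊆ B') :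
    interL n s A B ≤ interL n s A' B' :=
  (lintegral_mono fun _ => lintegral_mono_set hB).trans (lintegral_mono_set hA)

theorem interL_iUnion_left {ι : Type*} [Countable ι] {A : ι → Set (EuclideanSpace ℝ (Fin n))}
    (hA : ∀ i, MeasurableSet (A i)) (hd : Pairwise (Function.onFun Disjoint A))
    (B : Set (EuclideanSpace ℝ (Fin n))) :
    interL n s (⋃ i, A i) B = ∑' i, interL n s (A i) B :=
  lintegral_iUnion hA hd _

theorem perG_iUnion_le {ι : Type*} [Countable ι] (A : ι → Set (EuclideanSpace ℝ (Fin n))) :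
    perG n s (⋃ i, A i) ≤ ∑' i, perG n s (A i) :=
  (lintegral_iUnion_le _ _).trans <| ENNReal.tsum_le_tsum fun i =>
    interL_mono subset_rfl (compl_subset_compl.2 (subset_iUnion A i))

theorem le_interL_of_dist_le (hs : 0 ≤ s) {A B : Set (EuclideanSpace ℝ (Fin n))}
    (hA : MeasurableSet A) (hB : MeasurableSet B) (hAB : Disjoint A B) {D : ℝ}
    (hD : ∀ x ∈ A, ∀ y ∈ B, dist x y ≤ D) :
    ENNReal.ofReal (D ^ (-((n : ℝ) + s))) * volume B * volume A ≤ interL n s A B := by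
  have hker : ∀ x ∈ A, ∀ y ∈ B, ENNReal.ofReal (D ^ (-((n : ℝ) + s))) ≤ fracKer n s x y := by
    intro x hx y hy
    have hxy : 0 < ‖x - y‖ := by
      rw [← dist_eq_norm]
      exact dist_pos.2 fun h => hAB.ne_of_mem hx hy h
    exact ENNReal.ofReal_le_ofReal (Real.rpow_le_rpow_of_nonpos hxy
      (dist_eq_norm x y ▸ hD x hx y hy) (by linarith [(n.cast_nonneg : (0 : ℝ) ≤ n)]))
  rw [← setLIntegral_const, ← setLIntegral_const]
  exact setLIntegral_mono' hA fun x hx => setLIntegral_mono' hB (hker x hx)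

theorem interL_ball_pos (hs : 0 ≤ s) {p q : EuclideanSpace ℝ (Fin n)} {ρ τ : ℝ} (hρ : 0 < ρ)
    (hτ : 0 < τ) (hpq : ρ + τ ≤ dist p q) :
    0 < interL n s (ball p ρ) (ball q τ) := by
  have hD : ∀ x ∈ ball p ρ, ∀ y ∈ ball q τ, dist x y ≤ ρ + dist p q + τ := by
    intro x hx y hy
    linarith [dist_triangle4 x p q y, mem_ball.1 hx, mem_ball'.1 hy]
  refine lt_of_lt_of_le ?_ (le_interL_of_dist_le hs measurableSet_ball measurableSet_ball
    (ball_disjoint_ball hpq) hD)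
  have hD0 : 0 < ρ + dist p q + τ := by positivity
  exact ENNReal.mul_pos (ENNReal.mul_pos (ENNReal.ofReal_pos.2 (Real.rpow_pos_of_pos hD0 _)).ne'
    (measure_ball_pos _ _ hτ).ne').ne' (measure_ball_pos _ _ hρ).ne'

end Interaction

theorem perG_iUnion_ball_le {ι : Type*} [Countable ι] (n : ℕ) (s : ℝ)
    (c : ι → EuclideanSpace ℝ (Fin n)) {r : ι → ℝ} (hr : ∀ i, 0 < r i) :
    perG n s (⋃ i, ball (c i) (r i)) ≤
      (∑' i, ENNReal.ofReal (r i ^ ((n : ℝ) - s))) * perG n s (ball 0 1) := by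
  calc perG n s (⋃ i, ball (c i) (r i)) ≤ ∑' i, perG n s (ball (c i) (r i)) := perG_iUnion_le _
    _ = (∑' i, ENNReal.ofReal (r i ^ ((n : ℝ) - s))) * perG n s (ball 0 1) := by
        simp_rw [perG_ball n s _ (hr _)]
        exact ENNReal.tsum_mul_right

theorem tsum_mul_interL_le_perG_iUnion_ball {ι : Type*} [Countable ι] (n : ℕ) (s : ℝ)
    {c : ι → EuclideanSpace ℝ (Fin n)} {r : ι → ℝ} (hc : Pairwise fun i j => 4 ≤ dist (c i) (c j))
    (hr0 : ∀ i, 0 < r i) (hr1 : ∀ i, r i ≤ 1) {e : EuclideanSpace ℝ (Fin n)} (he : ‖e‖ = 1) :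
    (∑' i, ENNReal.ofReal (r i ^ ((n : ℝ) - s))) *
        interL n s (ball 0 1) (ball ((3 / 2 : ℝ) • e) (1 / 2)) ≤
      perG n s (⋃ i, ball (c i) (r i)) := by
  have hscale : ∀ i, interL n s (ball (c i) (r i))
      (ball (c i + r i • (3 / 2 : ℝ) • e) (r i * (1 / 2))) = ENNReal.ofReal (r i ^ ((n : ℝ) - s)) *
        interL n s (ball 0 1) (ball ((3 / 2 : ℝ) • e) (1 / 2)) := fun i => by
    simpa using interL_ball_add_smul n s (hr0 i) (c i) 0 ((3 / 2 : ℝ) • e) 1 (1 / 2)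
  rw [← ENNReal.tsum_mul_right, perG,
    interL_iUnion_left (fun _ => measurableSet_ball) (pairwise_disjoint_ball hc hr1)]
  refine ENNReal.tsum_le_tsum fun i => ?_
  rw [← hscale]
  exact interL_mono subset_rfl (ball_add_smul_subset_compl_iUnion hc hr1 he i)

/-- For every `n ≥ 2` and `σ ∈ (0,1)` there is a countable union of
open balls, any two at distance at least `1/2` from each other, whose global
`s`-perimeter is finite for `s ∈ (0,σ)` and infinite for `s ∈ [σ,1)`. -/
theorem exists_set_perG_finite_iff_lt (n : ℕ) (hn : 2 ≤ n) (σ : ℝ)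
    (hσ : σ ∈ Set.Ioo (0 : ℝ) 1) :
    ∃ (c : ℕ → EuclideanSpace ℝ (Fin n)) (r : ℕ → ℝ),
      (∀ i, 0 < r i) ∧
      (∀ i j, i ≠ j → ∀ x ∈ ball (c i) (r i), ∀ y ∈ ball (c j) (r j),
        (1 : ℝ) / 2 ≤ dist x y) ∧
      (∀ s ∈ Set.Ioo (0 : ℝ) σ, perG n s (⋃ i, ball (c i) (r i)) < ⊤) ∧
      (∀ s ∈ Set.Ico σ (1 : ℝ), perG n s (⋃ i, ball (c i) (r i)) = ⊤) := by
  obtain ⟨hσ0, hσ1⟩ := hσ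
  have hn1 : 1 ≤ n := by omega
  have : Nonempty (Fin n) := ⟨⟨0, hn1⟩⟩
  obtain ⟨e, he⟩ := exists_norm_eq (EuclideanSpace ℝ (Fin n)) zero_le_one
  have hnσ : 0 < (n : ℝ) - σ := by linarith [(Nat.one_le_cast (α := ℝ)).2 hn1]
  set r : ℕ → ℝ := fun i => ((i : ℝ) + 1) ^ (-(1 / ((n : ℝ) - σ))) with hr
  have hr0 : ∀ i, 0 < r i := fun i => by positivity
  have hr1 : ∀ i, r i ≤ 1 := fun i =>
    Real.rpow_le_one_of_one_le_of_nonpos (by linarith [i.cast_nonneg (α := ℝ)])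
      (neg_nonpos.2 (by positivity))
  have hc := pairwise_four_le_dist_smul he
  have hsum : ∀ s, ∑' i, ENNReal.ofReal (r i ^ ((n : ℝ) - s)) < ⊤ ↔ s < σ := fun s => by
    rw [hr, tsum_ofReal_nat_add_one_rpow_rpow_lt_top_iff, one_div_mul_eq_div, one_lt_div hnσ]
    constructor <;> intro h <;> linarith
  refine ⟨fun i => (4 * i : ℝ) • e, r, hr0, fun i j hij x hx y hy => ?_, fun s hs => ?_,
    fun s hs => ?_⟩
  · linarith [sub_le_dist_of_mem_ball hx hy, hc hij, hr1 i, hr1 j]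
  · exact (perG_iUnion_ball_le n s _ hr0).trans_lt (ENNReal.mul_lt_top ((hsum s).2 hs.2)
      (perG_unitBall_lt_top hn1 hs.1 (hs.2.trans hσ1)))
  · have hL : 0 < interL n s (ball 0 1) (ball ((3 / 2 : ℝ) • e) (1 / 2)) :=
      interL_ball_pos (hσ0.le.trans hs.1) one_pos one_half_pos (by simp [norm_smul, he]; norm_num)
    refine top_le_iff.1 (le_of_eq_of_le ?_ (tsum_mul_interL_le_perG_iUnion_ball n s hc hr0 hr1 he))
    rw [not_lt_top_iff.1 (mt (hsum s).1 (not_lt.2 hs.1)), ENNReal.top_mul hL.ne']
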